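/- Let G = (ℝ^d, ·) and L = (ℝ^m, ∘) be groups with polynomial multiplications and inversions and identity 0, and let i : ℝ^m → ℝ^d be a group homomorphism from L to G given coordinatewise by polynomials. Let (δ_t)_{t>0} be a straight approximate group dilation structure for G with limit law ∙, and (γ_t)_{t>0} a straight approximate group dilation structure for L with limit law ∗. Fix α > 0 and assume that for every v ∈ ℝ^m the limit p(v) := lim_{t→∞} δ_{1/t}( i( γ_{t^{1/α}}(v) ) ) exists. Then p is a continuous group homomorphism from (ℝ^m, ∗) to (ℝ^d, ∙), i.e. p(u ∗ v) = p(u) ∙ p(v) for all u, v ∈ ℝ^m; moreover δ_{s^α}(p(u)) = p(γ_s(u)) for every s > 0 and u ∈ ℝ^m. -/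

import Mathlib

open Filter Topology MeasureTheory

noncomputable section

/-- Straight dilation with exponents `a`: `(dil a t u) i = t ^ (a i) * u i`. -/
def dil {d : ℕ} (a : Fin d → ℝ) (t : ℝ) (u : Fin d → ℝ) : Fin d → ℝ :=
  fun i => t ^ a i * u i

/-- A group structure on `ℝ^d` with identity `0` whose multiplication and inversion are
given coordinatewise by real polynomial functions of the coordinates. -/
structure PolyGroup (d : ℕ) where
  mul : (Fin d → ℝ) → (Fin d → ℝ) → (Fin d → ℝ)
  inv : (Fin d → ℝ) → (Fin d → ℝ)
  mul_assoc' : ∀ x y z, mul (mul x y) z = mul x (mul y z)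
  mul_zero' : ∀ x, mul x 0 = x
  zero_mul' : ∀ x, mul 0 x = x
  mul_inv' : ∀ x, mul x (inv x) = 0
  inv_mul' : ∀ x, mul (inv x) x = 0
  poly_mul : ∀ i, ∃ p : MvPolynomial (Fin d ⊕ Fin d) ℝ,
    ∀ x y, mul x y i = MvPolynomial.eval (Sum.elim x y) p
  poly_inv : ∀ i, ∃ p : MvPolynomial (Fin d) ℝ,
    ∀ x, inv x i = MvPolynomial.eval x p

/-- Euclidean norm on `ℝ^d`. -/
def eucNorm {d : ℕ} (x : Fin d → ℝ) : ℝ := Real.sqrt (∑ i, x i ^ 2)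

/-- A straight approximate group dilation structure for `G`, with the limit law `bullet`
and limit inverse `bulletInv`. -/
structure ApproxDil (d : ℕ) (G : PolyGroup d) where
  a : Fin d → ℝ
  a_pos : ∀ i, 0 < a i
  bulletInv : (Fin d → ℝ) → (Fin d → ℝ)
  bullet : (Fin d → ℝ) → (Fin d → ℝ) → (Fin d → ℝ)
  tendsto_inv : ∀ x,
    Tendsto (fun t : ℝ => dil a t⁻¹ (G.inv (dil a t x))) atTop (𝓝 (bulletInv x))
  tendsto_mul : ∀ x y,
    Tendsto (fun t : ℝ => dil a t⁻¹ (G.mul (dil a t x) (dil a t y))) atTop (𝓝 (bullet x y))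

/-! Every coordinate of `t ↦ δ_{1/t} (i (γ_{t^{1/α}} w))` is a polynomial in `w` whose monomials
are among those of `i`, with coefficients depending on `t`. Monomial functions are linearly
independent, so their span is finite-dimensional and hence closed, with the coefficients
depending continuously on the function: pointwise convergence of such a family forces the
coefficients to converge. The limit `p` is therefore polynomial, and the convergence is
continuous, `q_t (w_t) → p w₀` whenever `w_t → w₀`; likewise for the rescaled multiplication
of `G`. Passing to the limit in `i (x ∘ y) = i x · i y`, conjugated by the dilations, gives the
homomorphism property; equivariance is the substitution `t ↦ t s^α`. -/

section LinearCombination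

variable {ι X α : Type*} [Fintype ι] {φ : ι → X → ℝ}
  {l : Filter α} [l.NeBot] {c : α → ι → ℝ} {F : X → ℝ}

theorem LinearIndependent.exists_tendsto_coeff (hφ : LinearIndependent ℝ φ)
    (hF : ∀ x, Tendsto (fun t => ∑ k, c t k * φ k x) l (𝓝 (F x))) :
    ∃ v, Tendsto c l (𝓝 v) ∧ ∀ x, F x = ∑ k, v k * φ k x := by
  have hφx : ∀ (w : ι → ℝ) x, Fintype.linearCombination ℝ φ w x = ∑ k, w k * φ k x := by
    simp [Fintype.linearCombination_apply]
  have hemb : IsClosedEmbedding (Fintype.linearCombination ℝ φ) :=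
    LinearMap.isClosedEmbedding_of_injective
      (LinearMap.ker_eq_bot.mpr hφ.fintypeLinearCombination_injective)
  have hlim : Tendsto (fun t => Fintype.linearCombination ℝ φ (c t)) l (𝓝 F) :=
    tendsto_pi_nhds.mpr fun x => by simpa only [hφx] using hF x
  obtain ⟨v, rfl⟩ := hemb.isClosed_range.mem_of_tendsto hlim (.of_forall fun t => ⟨c t, rfl⟩)
  exact ⟨v, hemb.tendsto_nhds_iff.mpr hlim, hφx v⟩

theorem LinearIndependent.tendsto_comp_of_tendsto [TopologicalSpace X]
    (hφ : LinearIndependent ℝ φ) (hφc : ∀ k, Continuous (φ k))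
    (hF : ∀ x, Tendsto (fun t => ∑ k, c t k * φ k x) l (𝓝 (F x))) :
    Continuous F ∧ ∀ {x : α → X} {x₀ : X}, Tendsto x l (𝓝 x₀) →
      Tendsto (fun t => ∑ k, c t k * φ k (x t)) l (𝓝 (F x₀)) := by
  obtain ⟨v, hcv, rfl⟩ : ∃ v, Tendsto c l (𝓝 v) ∧ F = fun x => ∑ k, v k * φ k x := by
    obtain ⟨v, hcv, hv⟩ := hφ.exists_tendsto_coeff hF
    exact ⟨v, hcv, funext hv⟩
  refine ⟨by fun_prop, fun hx => tendsto_finsetSum _ fun k _ => ?_⟩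
  exact (tendsto_pi_nhds.mp hcv k).mul ((hφc k).continuousAt.tendsto.comp hx)

end LinearCombination

theorem linearIndependent_monomial_eval {K σ : Type*} [Field K] [Infinite K] [Fintype σ] :
    LinearIndependent K fun (μ : σ →₀ ℕ) (x : σ → K) => ∏ k, x k ^ μ k := by
  let evalFun : MvPolynomial σ K →ₗ[K] (σ → K) → K :=
    LinearMap.pi fun x => (MvPolynomial.aeval x).toLinearMap
  have hker : LinearMap.ker evalFun = ⊥ := LinearMap.ker_eq_bot.mpr fun P Q h =>
    MvPolynomial.funext fun x => congrFun h x
  have hmon : (fun (μ : σ →₀ ℕ) (x : σ → K) => ∏ k, x k ^ μ k) =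
      evalFun ∘ MvPolynomial.basisMonomials σ K := by
    funext μ x
    simp [evalFun, MvPolynomial.aeval_monomial, Finsupp.prod_pow]
  rw [hmon]
  exact (MvPolynomial.basisMonomials σ K).linearIndependent.map' evalFun hker

theorem MvPolynomial.eval_mul_eq_sum {σ : Type*} [Fintype σ] (P : MvPolynomial σ ℝ)
    (r x : σ → ℝ) :
    eval (r * x) P = ∑ μ : P.support, (coeff μ P * ∏ k, r k ^ (μ : σ →₀ ℕ) k) *
      ∏ k, x k ^ (μ : σ →₀ ℕ) k := by
  rw [eval_eq', ← Finset.sum_coe_sort]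
  refine Finset.sum_congr rfl fun μ _ => ?_
  simp only [Pi.mul_apply, mul_pow, Finset.prod_mul_distrib, mul_assoc]

def IsPolyMap {σ ι : Type*} (f : (σ → ℝ) → ι → ℝ) : Prop :=
  ∀ j, ∃ P : MvPolynomial σ ℝ, ∀ x, f x j = MvPolynomial.eval x P

theorem IsPolyMap.tendsto_comp_of_tendsto {σ ι α : Type*} [Fintype σ] {f : (σ → ℝ) → ι → ℝ}
    (hf : IsPolyMap f) {l : Filter α} [l.NeBot] {s : α → ι → ℝ} {r : α → σ → ℝ}
    {F : (σ → ℝ) → ι → ℝ} (hF : ∀ x, Tendsto (fun t => s t * f (r t * x)) l (𝓝 (F x))) :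
    Continuous F ∧ ∀ {x : α → σ → ℝ} {x₀ : σ → ℝ}, Tendsto x l (𝓝 x₀) →
      Tendsto (fun t => s t * f (r t * x t)) l (𝓝 (F x₀)) := by
  choose P hP using hf
  have hsum : ∀ j t x, (s t * f (r t * x)) j = ∑ μ : (P j).support,
      s t j * (MvPolynomial.coeff μ (P j) * ∏ k, r t k ^ (μ : σ →₀ ℕ) k) *
        ∏ k, x k ^ (μ : σ →₀ ℕ) k := by
    intro j t x
    simp only [Pi.mul_apply, hP, MvPolynomial.eval_mul_eq_sum, Finset.mul_sum, mul_assoc]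
  have hmon := fun j => (linearIndependent_monomial_eval (K := ℝ)).comp
    (Subtype.val : (P j).support → σ →₀ ℕ) Subtype.val_injective
  have hcoord := fun j => (hmon j).tendsto_comp_of_tendsto (fun μ => by fun_prop) fun x => by
    simpa only [hsum, Function.comp_apply] using tendsto_pi_nhds.mp (hF x) j
  refine ⟨continuous_pi fun j => (hcoord j).1, fun hx => tendsto_pi_nhds.mpr fun j => ?_⟩
  simpa only [hsum, Function.comp_apply] using (hcoord j).2 hx

theorem dil_dil {d : ℕ} (a : Fin d → ℝ) {s t : ℝ} (hs : 0 ≤ s) (ht : 0 ≤ t) (u : Fin d → ℝ) :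
    dil a s (dil a t u) = dil a (s * t) u := by
  funext j
  simp only [dil, Real.mul_rpow hs ht, mul_assoc]

theorem dil_dil_inv {d : ℕ} (a : Fin d → ℝ) {t : ℝ} (ht : 0 < t) (u : Fin d → ℝ) :
    dil a t (dil a t⁻¹ u) = u := by
  rw [dil_dil a ht.le (inv_nonneg.mpr ht.le), mul_inv_cancel₀ ht.ne']
  funext j
  simp [dil]

theorem continuous_dil {d : ℕ} (a : Fin d → ℝ) (t : ℝ) : Continuous (dil a t) :=
  continuous_pi fun j => continuous_const.mul (continuous_apply j)

theorem PolyGroup.isPolyMap_mul {d : ℕ} (G : PolyGroup d) :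
    IsPolyMap fun x : Fin d ⊕ Fin d → ℝ => G.mul (x ∘ Sum.inl) (x ∘ Sum.inr) := by
  intro j
  obtain ⟨P, hP⟩ := G.poly_mul j
  exact ⟨P, fun x => (hP _ _).trans (by rw [Sum.elim_comp_inl_inr])⟩

theorem ApproxDil.tendsto_mul_comp {d : ℕ} {G : PolyGroup d} (D : ApproxDil d G)
    {x y : ℝ → Fin d → ℝ} {x₀ y₀ : Fin d → ℝ} (hx : Tendsto x atTop (𝓝 x₀))
    (hy : Tendsto y atTop (𝓝 y₀)) :
    Tendsto (fun t => dil D.a t⁻¹ (G.mul (dil D.a t (x t)) (dil D.a t (y t)))) atTop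
      (𝓝 (D.bullet x₀ y₀)) := by
  have hxy : Tendsto (fun t => Sum.elim (x t) (y t)) atTop (𝓝 (Sum.elim x₀ y₀)) :=
    (Homeomorph.sumArrowHomeomorphProdArrow.symm.continuous.tendsto (x₀, y₀)).comp
      (hx.prodMk_nhds hy)
  exact (G.isPolyMap_mul.tendsto_comp_of_tendsto (s := fun t j => t⁻¹ ^ D.a j)
    (r := fun t => Sum.elim (fun j => t ^ D.a j) (fun j => t ^ D.a j))
    (F := fun z => D.bullet (z ∘ Sum.inl) (z ∘ Sum.inr))
    fun z => D.tendsto_mul _ _).2 hxy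

theorem map_bullet_of_tendsto_comp {d m : ℕ} {G : PolyGroup d} {L : PolyGroup m}
    {i : (Fin m → ℝ) → (Fin d → ℝ)} (hihom : ∀ u v, i (L.mul u v) = G.mul (i u) (i v))
    (DG : ApproxDil d G) (DL : ApproxDil m L) {τ : ℝ → ℝ} (hτ : Tendsto τ atTop atTop)
    {p : (Fin m → ℝ) → (Fin d → ℝ)}
    (hq : ∀ {w : ℝ → Fin m → ℝ} {w₀}, Tendsto w atTop (𝓝 w₀) →
      Tendsto (fun t => dil DG.a t⁻¹ (i (dil DL.a (τ t) (w t)))) atTop (𝓝 (p w₀)))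
    (u v : Fin m → ℝ) : p (DL.bullet u v) = DG.bullet (p u) (p v) := by
  have hlhs := hq ((DL.tendsto_mul u v).comp hτ)
  have hrhs := DG.tendsto_mul_comp (hq (tendsto_const_nhds (x := u)))
    (hq (tendsto_const_nhds (x := v)))
  refine tendsto_nhds_unique (hlhs.congr' ?_) hrhs
  filter_upwards [hτ.eventually_gt_atTop 0, eventually_gt_atTop 0] with t hτt ht
  simp only [Function.comp_apply, dil_dil_inv _ hτt, hihom, dil_dil_inv _ ht]

theorem dil_rpow_eq_of_tendsto {d m : ℕ} {a : Fin m → ℝ} {b : Fin d → ℝ}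
    {i : (Fin m → ℝ) → (Fin d → ℝ)} {α : ℝ} (hα : 0 < α) {p : (Fin m → ℝ) → (Fin d → ℝ)}
    (hp : ∀ v, Tendsto (fun t : ℝ => dil b t⁻¹ (i (dil a (t ^ (1 / α)) v))) atTop (𝓝 (p v)))
    {s : ℝ} (hs : 0 < s) (u : Fin m → ℝ) : dil b (s ^ α) (p u) = p (dil a s u) := by
  have hsα : 0 < s ^ α := Real.rpow_pos_of_pos hs α
  have hlhs : Tendsto (fun t => dil b (s ^ α) (dil b (t * s ^ α)⁻¹
      (i (dil a ((t * s ^ α) ^ (1 / α)) u)))) atTop (𝓝 (dil b (s ^ α) (p u))) :=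
    ((continuous_dil b _).tendsto _).comp ((hp u).comp (tendsto_id.atTop_mul_const hsα))
  refine tendsto_nhds_unique (hlhs.congr' ?_) (hp (dil a s u))
  filter_upwards [eventually_gt_atTop 0] with t ht
  have hroot : (t * s ^ α) ^ (1 / α) = t ^ (1 / α) * s := by
    rw [Real.mul_rpow ht.le hsα.le, ← Real.rpow_mul hs.le, mul_one_div_cancel hα.ne',
      Real.rpow_one]
  rw [dil_dil _ hsα.le (by positivity), hroot, ← dil_dil _ (by positivity) hs.le]
  field_simp

theorem stmt_7 (d m : ℕ) (G : PolyGroup d) (L : PolyGroup m)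
    (i : (Fin m → ℝ) → (Fin d → ℝ))
    (hipoly : ∀ j : Fin d, ∃ p : MvPolynomial (Fin m) ℝ,
      ∀ v, i v j = MvPolynomial.eval v p)
    (hihom : ∀ u v, i (L.mul u v) = G.mul (i u) (i v))
    (DG : ApproxDil d G) (DL : ApproxDil m L)
    (α : ℝ) (hα : 0 < α)
    (p : (Fin m → ℝ) → (Fin d → ℝ))
    (hp : ∀ v, Tendsto (fun t : ℝ => dil DG.a t⁻¹ (i (dil DL.a (t ^ (1 / α)) v))) atTop
      (𝓝 (p v))) :
    Continuous p ∧ (∀ u v, p (DL.bullet u v) = DG.bullet (p u) (p v)) ∧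
    (∀ s : ℝ, 0 < s → ∀ u, dil DG.a (s ^ α) (p u) = p (dil DL.a s u)) := by
  obtain ⟨hcont, hq⟩ := IsPolyMap.tendsto_comp_of_tendsto (f := i) hipoly
    (s := fun t j => t⁻¹ ^ DG.a j) (r := fun t k => (t ^ (1 / α)) ^ DL.a k) hp
  exact ⟨hcont, map_bullet_of_tendsto_comp hihom DG DL (tendsto_rpow_atTop (by positivity)) hq,
    fun s hs => dil_rpow_eq_of_tendsto hα hp hs⟩
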